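/- (Integrality gap in dimension 1) Let K be the admissible 1-complex on the seven-element vertex set {A, B, C, D, E, F, G} whose facets are the fifteen directed edges: the hexagon cycle [B,C], [C,D], [D,E], [E,F], [F,G], [G,B]; the spokes [A,B], [A,D], [A,F], [C,A], [E,A], [G,A]; and the long chords [B,E], [D,G], [F,C]. Then V_ℤ(K) = 7 and V_ℚ(K) = 6; in particular K exhibits an integrality gap V_ℤ(K) − V_ℚ(K) = 1. -/

import Mathlib

/-!
Framework: oriented simplicial chains on a finite vertex set.

An oriented `n`-simplex on a vertex set `V` is an `(n+1)`-tuple of distinct vertices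
up to even permutation; an odd permutation yields the oppositely oriented simplex.
An `n`-chain with coefficients in `R` is encoded as an *alternating* function
`c : (Fin (n+1) → V) → R`: the value `c f` is the coefficient of the oriented
simplex represented by the tuple `f`, and reversing orientation negates it.
-/

/-- `c` is an `n`-chain: it is alternating under permutations of the tuple
(so an oriented simplex and its orientation reversal are identified up to sign). -/
def IsAltChain {V : Type*} (n : ℕ) {R : Type*} [AddCommGroup R]
    (c : (Fin (n + 1) → V) → R) : Prop :=
  ∀ (σ : Equiv.Perm (Fin (n + 1))) (f : Fin (n + 1) → V),
    c (f ∘ σ) = (Equiv.Perm.sign σ : ℤ) • c f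

/-- The boundary operator: `∂` sends `[v₀,…,vₙ]` to `Σᵢ (−1)ⁱ [v₀,…,v̂ᵢ,…,vₙ]`;
in the alternating-function encoding this is `(∂c) g = Σ_{v} c (v ∷ g)`. -/
def bdry {V : Type*} [Fintype V] {n : ℕ} {R : Type*} [AddCommMonoid R]
    (c : (Fin (n + 1) → V) → R) : (Fin n → V) → R :=
  fun g => ∑ v : V, c (Fin.cons v g)

/-- 1-norm of an integral chain: sum of the absolute values of the coefficients,
one per oriented simplex (each simplex has `(n+1)!` tuple representatives). -/
noncomputable def normZ {V : Type*} [Fintype V] [DecidableEq V] {n : ℕ}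
    (c : (Fin (n + 1) → V) → ℤ) : ℝ :=
  (∑ f : Fin (n + 1) → V, |(c f : ℝ)|) / (Nat.factorial (n + 1) : ℝ)

/-- 1-norm of a rational chain. -/
noncomputable def normQ {V : Type*} [Fintype V] [DecidableEq V] {n : ℕ}
    (c : (Fin (n + 1) → V) → ℚ) : ℝ :=
  (∑ f : Fin (n + 1) → V, |(c f : ℝ)|) / (Nat.factorial (n + 1) : ℝ)

/-- An admissible `d`-complex on `V`: an integral `d`-chain in which every oriented
`d`-simplex appears with coefficient `0` or `1` (i.e. every tuple has coefficient
`-1`, `0` or `1`), and whose boundary vanishes. Its *facets* are the oriented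
simplices (tuples) with coefficient `1`. -/
structure IsAdmissible {V : Type*} [Fintype V] (d : ℕ)
    (K : (Fin (d + 1) → V) → ℤ) : Prop where
  chain : IsAltChain d K
  coeff : ∀ f, K f = -1 ∨ K f = 0 ∨ K f = 1
  closed : ∀ g, bdry K g = 0

/-- `V_ℤ(K)`: the minimum 1-norm of an integral `(d+1)`-chain `α` with `∂α = K`
(the minimum is attained, so it equals this infimum). -/
noncomputable def VZ {V : Type*} [Fintype V] [DecidableEq V] (d : ℕ)
    (K : (Fin (d + 1) → V) → ℤ) : ℝ :=
  sInf { x : ℝ | ∃ α : (Fin (d + 2) → V) → ℤ,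
    IsAltChain (d + 1) α ∧ (∀ g, bdry α g = K g) ∧ x = normZ α }

/-- `V_ℚ(K)`: the minimum 1-norm of a rational `(d+1)`-chain `α` with `∂α = K`
(the minimum is attained, so it equals this infimum). -/
noncomputable def VQ {V : Type*} [Fintype V] [DecidableEq V] (d : ℕ)
    (K : (Fin (d + 1) → V) → ℤ) : ℝ :=
  sInf { x : ℝ | ∃ α : (Fin (d + 2) → V) → ℚ,
    IsAltChain (d + 1) α ∧ (∀ g, bdry α g = (K g : ℚ)) ∧ x = normQ α }

/-- The unit-flux constraint: for every oriented `(d+1)`-simplex `t` on `V`,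
the total flux through its oriented boundary facets is at most `1`. -/
def UnitFlux {V : Type*} (d : ℕ) (φ : (Fin (d + 1) → V) → ℝ) : Prop :=
  ∀ t : Fin (d + 2) → V, Function.Injective t →
    ∑ i : Fin (d + 2), (-1 : ℝ) ^ (i : ℕ) * φ (t ∘ i.succAbove) ≤ 1

/-- `φ(F₁) + ⋯ + φ(Fₙ)`, the sum of a flux function over the facets of `K`
(each facet has `(d+1)!` tuple representatives `f`, on which `K f * φ f` agree). -/
noncomputable def fluxSum {V : Type*} [Fintype V] (d : ℕ)
    (φ : (Fin (d + 1) → V) → ℝ) (K : (Fin (d + 1) → V) → ℤ) : ℝ :=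
  (∑ f : Fin (d + 1) → V, (K f : ℝ) * φ f) / (Nat.factorial (d + 1) : ℝ)

/-- Pushforward of a chain along a map of vertex sets `q : V → W`
(simplices whose image is degenerate die). -/
def pushChain {V W : Type*} [Fintype V] [DecidableEq W] (q : V → W) {n : ℕ}
    {R : Type*} [AddCommMonoid R] (c : (Fin n → V) → R) : (Fin n → W) → R :=
  fun f => ∑ g : Fin n → V, if q ∘ g = f then c g else 0

/-- The chain consisting of the single oriented simplex `[s 0, …, s n]`. -/
def simplexChain {V : Type*} [DecidableEq V] {n : ℕ} (s : Fin (n + 1) → V) :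
    (Fin (n + 1) → V) → ℤ :=
  fun f => ∑ σ : Equiv.Perm (Fin (n + 1)),
    if f = s ∘ σ then (Equiv.Perm.sign σ : ℤ) else 0

/-- The chain of the disjoint union `K ⊔ K'` on `V ⊕ V'`: it is `K + K'`. -/
def unionChain {V V' : Type*} [Fintype V] [Fintype V'] [DecidableEq V] [DecidableEq V']
    {n : ℕ} (K : (Fin n → V) → ℤ) (K' : (Fin n → V') → ℤ) : (Fin n → V ⊕ V') → ℤ :=
  fun f => pushChain Sum.inl K f + pushChain Sum.inr K' f

/-- The chain of the connected sum `K # K'` on the glued vertex set `W`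
(with gluing maps `j : V → W`, `j' : V' → W` identifying the facet `vF` of `K`
with the facet `vF'` of `K'`): the image of `K + K' − F − F'` under the gluing. -/
def connSum {V V' W : Type*} [Fintype V] [Fintype V'] [DecidableEq V] [DecidableEq V']
    [DecidableEq W] {d : ℕ} (K : (Fin (d + 1) → V) → ℤ) (K' : (Fin (d + 1) → V') → ℤ)
    (vF : Fin (d + 1) → V) (vF' : Fin (d + 1) → V') (j : V → W) (j' : V' → W) :
    (Fin (d + 1) → W) → ℤ :=
  pushChain (Sum.elim j j')
    (fun g : Fin (d + 1) → V ⊕ V' =>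
      pushChain Sum.inl K g + pushChain Sum.inr K' g
        - pushChain Sum.inl (simplexChain vF) g - pushChain Sum.inr (simplexChain vF') g)

/-- The admissible 1-complex on the seven vertices `A = 0, B = 1, …, G = 6` with
fifteen directed edges: the hexagon `[B,C], [C,D], [D,E], [E,F], [F,G], [G,B]`;
the spokes `[A,B], [A,D], [A,F], [C,A], [E,A], [G,A]`; and the long chords
`[B,E], [D,G], [F,C]`. -/
def gapComplex : (Fin 2 → Fin 7) → ℤ := fun f =>
  simplexChain ![1, 2] f + simplexChain ![2, 3] f + simplexChain ![3, 4] f +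
    simplexChain ![4, 5] f + simplexChain ![5, 6] f + simplexChain ![6, 1] f +
    simplexChain ![0, 1] f + simplexChain ![0, 3] f + simplexChain ![0, 5] f +
    simplexChain ![2, 0] f + simplexChain ![4, 0] f + simplexChain ![6, 0] f +
    simplexChain ![1, 4] f + simplexChain ![3, 6] f + simplexChain ![5, 2] f

section General

open Finset Equiv

variable {V : Type*}

lemma comp_perm_cancel {n : ℕ} (σ : Equiv.Perm (Fin n)) (f g : Fin n → V) :
    f ∘ ⇑σ = g ∘ ⇑σ ↔ f = g := by
  constructor
  · intro h
    funext x
    have := congrFun h (σ.symm x)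
    simpa using this
  · rintro rfl; rfl

lemma simplexChain_alt [DecidableEq V] {n : ℕ} (s : Fin (n + 1) → V) :
    IsAltChain n (simplexChain s) := by
  intro σ f
  unfold simplexChain
  have key := Fintype.sum_equiv (Equiv.mulRight σ)
      (fun τ : Equiv.Perm (Fin (n+1)) =>
        if f = s ∘ ⇑τ then ((Equiv.Perm.sign τ : ℤ) * (Equiv.Perm.sign σ : ℤ)) else 0)
      (fun τ : Equiv.Perm (Fin (n+1)) =>
        if f ∘ ⇑σ = s ∘ ⇑τ then ((Equiv.Perm.sign τ : ℤ)) else 0)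
      (fun τ => by
        simp only [Equiv.coe_mulRight, Equiv.Perm.coe_mul,
          show s ∘ (⇑τ ∘ ⇑σ) = (s ∘ ⇑τ) ∘ ⇑σ from rfl, comp_perm_cancel σ,
          map_mul, Units.val_mul])
  rw [← key, zsmul_eq_mul, Finset.mul_sum]
  refine Finset.sum_congr rfl fun τ _ => ?_
  simp only [mul_ite, mul_zero]
  split
  · push_cast; ring
  · rfl

lemma IsAltChain.addHom {n : ℕ} {R S : Type*} [AddCommGroup R] [AddCommGroup S]
    (g : R →+ S) {c : (Fin (n + 1) → V) → R} (h : IsAltChain n c) :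
    IsAltChain n (fun f => g (c f)) := fun σ f => by
  simp only
  rw [h σ f, map_zsmul]

lemma alt_eq_zero_of_not_injective {n : ℕ} {R : Type*} [AddCommGroup R]
    [NoZeroSMulDivisors ℤ R] {c : (Fin (n + 1) → V) → R} (hc : IsAltChain n c)
    {f : Fin (n + 1) → V} (hf : ¬ Function.Injective f) : c f = 0 := by
  obtain ⟨a, b, hab, hne⟩ := Function.not_injective_iff.mp hf
  have hcomp : f ∘ ⇑(Equiv.swap a b) = f := by
    funext x
    rcases eq_or_ne x a with rfl | hxa
    · simp [Equiv.swap_apply_left, hab]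
    rcases eq_or_ne x b with rfl | hxb
    · simp [Equiv.swap_apply_right, hab]
    · simp [Equiv.swap_apply_of_ne_of_ne hxa hxb]
  have h2 := hc (Equiv.swap a b) f
  rw [hcomp, Equiv.Perm.sign_swap hne] at h2
  have : (2 : ℤ) • c f = 0 := by
    have : c f + c f = 0 := by
      nth_rewrite 1 [h2]
      simp
    rw [two_smul]; exact this
  rcases smul_eq_zero.mp this with h | h
  · norm_num at h
  · exact h

lemma sum_comp_perm [Fintype V] {n : ℕ} {M : Type*} [AddCommMonoid M]
    (σ : Equiv.Perm (Fin n)) (F : (Fin n → V) → M) :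
    ∑ f : Fin n → V, F f = ∑ f : Fin n → V, F (f ∘ ⇑σ) := by
  refine (Fintype.sum_bijective (fun f => f ∘ ⇑σ) ?_ _ _ (fun f => rfl)).symm
  rw [Function.bijective_iff_has_inverse]
  refine ⟨fun f => f ∘ ⇑σ.symm, fun f => ?_, fun f => ?_⟩ <;>
    · funext x; simp

end General

section LP

open Finset Equiv

variable {V : Type*}

/-- flux of `φ` through the boundary of the (possibly degenerate) 2-simplex `t`. -/
def Flux (φ : (Fin 2 → V) → ℝ) (t : Fin 3 → V) : ℝ :=
  ∑ i : Fin 3, (-1 : ℝ) ^ (i : ℕ) * φ (t ∘ i.succAbove)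

lemma flux_swap (φ : (Fin 2 → V) → ℝ) (hφ : IsAltChain 1 φ) (f : Fin 3 → V) :
    Flux φ (f ∘ ⇑(Equiv.swap (0 : Fin 3) 1)) = - Flux φ f := by
  have h0 : ⇑(Equiv.swap (0:Fin 3) 1) ∘ (0:Fin 3).succAbove = (1:Fin 3).succAbove := by decide
  have h1 : ⇑(Equiv.swap (0:Fin 3) 1) ∘ (1:Fin 3).succAbove = (0:Fin 3).succAbove := by decide
  have h2 : ⇑(Equiv.swap (0:Fin 3) 1) ∘ (2:Fin 3).succAbove
      = (2:Fin 3).succAbove ∘ ⇑(Equiv.swap (0:Fin 2) 1) := by decide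
  unfold Flux
  rw [Fin.sum_univ_three, Fin.sum_univ_three]
  rw [Function.comp_assoc, Function.comp_assoc, Function.comp_assoc, h0, h1, h2,
    ← Function.comp_assoc]
  have hs := hφ (Equiv.swap (0:Fin 2) 1) (f ∘ (2:Fin 3).succAbove)
  rw [Equiv.Perm.sign_swap (by decide)] at hs
  rw [show ((-1 : ℤˣ) : ℤ) • φ (f ∘ (2:Fin 3).succAbove)
      = -φ (f ∘ (2:Fin 3).succAbove) by simp] at hs
  rw [hs]
  norm_num
  ring

lemma pairing [Fintype V] (φ : (Fin 2 → V) → ℝ) (α : (Fin 3 → V) → ℝ)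
    (hα : IsAltChain 2 α) :
    ∑ f : Fin 3 → V, α f * Flux φ f = 3 * ∑ g : Fin 2 → V, bdry α g * φ g := by
  have step1 : ∀ i : Fin 3,
      (∑ f : Fin 3 → V, α f * ((-1 : ℝ) ^ (i : ℕ) * φ (f ∘ i.succAbove)))
        = ∑ f : Fin 3 → V, α f * φ (f ∘ Fin.succ) := by
    intro i
    rw [sum_comp_perm (i.cycleRange)
      (fun f => α f * ((-1 : ℝ) ^ (i : ℕ) * φ (f ∘ i.succAbove)))]
    refine Finset.sum_congr rfl fun f _ => ?_
    have hcomp : ⇑(i.cycleRange) ∘ i.succAbove = Fin.succ := funext (Fin.cycleRange_succAbove i)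
    have hsign : ((Equiv.Perm.sign (i.cycleRange) : ℤ) : ℝ) = (-1 : ℝ) ^ (i : ℕ) := by
      rw [Fin.sign_cycleRange]; push_cast; ring
    have halt := hα (i.cycleRange) f
    rw [Function.comp_assoc, hcomp, halt, zsmul_eq_mul]
    push_cast [hsign]
    have h11 : (-1 : ℝ) ^ (i : ℕ) * (-1 : ℝ) ^ (i : ℕ) = 1 := by
      rw [← pow_add]
      exact Even.neg_one_pow ⟨(i : ℕ), rfl⟩
    calc ((-1 : ℝ) ^ (i:ℕ) * α f) * ((-1:ℝ)^(i:ℕ) * φ (f ∘ Fin.succ))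
        = ((-1 : ℝ) ^ (i:ℕ) * (-1:ℝ)^(i:ℕ)) * (α f * φ (f ∘ Fin.succ)) := by ring
      _ = α f * φ (f ∘ Fin.succ) := by rw [h11, one_mul]
  have step2 : (∑ f : Fin 3 → V, α f * φ (f ∘ Fin.succ))
      = ∑ g : Fin 2 → V, bdry α g * φ g := by
    rw [show (∑ g : Fin 2 → V, bdry α g * φ g)
        = ∑ g : Fin 2 → V, ∑ v : V, α (Fin.cons v g) * φ g by
      refine Finset.sum_congr rfl fun g _ => ?_
      rw [bdry, Finset.sum_mul]]
    rw [← Fintype.sum_prod_type']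
    apply Fintype.sum_equiv (((Fin.consEquiv fun _ => V).symm).trans (Equiv.prodComm _ _))
    intro f
    have hcst : Fin.cons (((Fin.consEquiv fun _ => V).symm f).swap.2)
        (((Fin.consEquiv fun _ => V).symm f).swap.1) = f := Fin.cons_self_tail f
    show α f * φ (f ∘ Fin.succ)
        = α (Fin.cons (((Fin.consEquiv fun _ => V).symm f).swap.2)
            (((Fin.consEquiv fun _ => V).symm f).swap.1))
          * φ (((Fin.consEquiv fun _ => V).symm f).swap.1)
    rw [hcst]
    rfl
  calc ∑ f : Fin 3 → V, α f * Flux φ f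
      = ∑ f : Fin 3 → V, ∑ i : Fin 3, α f * ((-1 : ℝ) ^ (i:ℕ) * φ (f ∘ i.succAbove)) := by
        refine Finset.sum_congr rfl fun f _ => ?_
        rw [Flux, Finset.mul_sum]
    _ = ∑ i : Fin 3, ∑ f : Fin 3 → V, α f * ((-1 : ℝ) ^ (i:ℕ) * φ (f ∘ i.succAbove)) :=
        Finset.sum_comm
    _ = ∑ _i : Fin 3, ∑ f : Fin 3 → V, α f * φ (f ∘ Fin.succ) :=
        Finset.sum_congr rfl fun i _ => step1 i
    _ = 3 * ∑ f : Fin 3 → V, α f * φ (f ∘ Fin.succ) := by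
        rw [Finset.sum_const, Finset.card_univ, Fintype.card_fin]
        push_cast [nsmul_eq_mul]
        ring
    _ = 3 * ∑ g : Fin 2 → V, bdry α g * φ g := by rw [step2]

lemma lp_bound [Fintype V] (φ : (Fin 2 → V) → ℝ) (hφ : IsAltChain 1 φ)
    (hU : UnitFlux 1 φ) (α : (Fin 3 → V) → ℝ) (hα : IsAltChain 2 α) :
    3 * ∑ g : Fin 2 → V, bdry α g * φ g ≤ ∑ f : Fin 3 → V, |α f| := by
  rw [← pairing φ α hα]
  apply Finset.sum_le_sum
  intro f _
  by_cases hinj : Function.Injective f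
  · have h1 : Flux φ f ≤ 1 := hU f hinj
    have h2 : -1 ≤ Flux φ f := by
      have hs : Function.Injective (f ∘ ⇑(Equiv.swap (0:Fin 3) 1)) :=
        hinj.comp (Equiv.injective _)
      have hb := hU _ hs
      rw [show (∑ i : Fin 3, (-1:ℝ)^(i:ℕ) * φ ((f ∘ ⇑(Equiv.swap (0:Fin 3) 1)) ∘ i.succAbove))
          = Flux φ (f ∘ ⇑(Equiv.swap (0:Fin 3) 1)) from rfl, flux_swap φ hφ f] at hb
      linarith
    calc α f * Flux φ f ≤ |α f * Flux φ f| := le_abs_self _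
      _ = |α f| * |Flux φ f| := abs_mul _ _
      _ ≤ |α f| * 1 := mul_le_mul_of_nonneg_left (abs_le.mpr ⟨h2, h1⟩) (abs_nonneg _)
      _ = |α f| := mul_one _
  · rw [alt_eq_zero_of_not_injective hα hinj]
    simp

end LP

section Parity
set_option maxRecDepth 100000
set_option maxHeartbeats 2000000

open Finset

def M2 : Finset (Fin 2 → Fin 7) := univ.filter (fun g => g 0 < g 1)
def M3 : Finset (Fin 3 → Fin 7) := univ.filter (fun f => f 0 < f 1 ∧ f 1 < f 2)

lemma cons_succAbove_eq {V : Type*} (f : Fin 3 → V) (k : Fin 3) :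
    Fin.cons (f k) (f ∘ k.succAbove) = f ∘ ⇑(k.cycleRange)⁻¹ := by
  funext x
  induction x using Fin.cases with
  | zero =>
    show f k = f ((k.cycleRange)⁻¹ 0)
    congr 1
    symm
    rw [Equiv.Perm.inv_eq_iff_eq, Fin.cycleRange_self]
  | succ j =>
    show f (k.succAbove j) = f ((k.cycleRange)⁻¹ j.succ)
    congr 1
    symm
    rw [Equiv.Perm.inv_eq_iff_eq, Fin.cycleRange_succAbove]

lemma alt_cons_succAbove {R : Type*} [AddCommGroup R] {α : (Fin 3 → Fin 7) → R}
    (hα : IsAltChain 2 α) (f : Fin 3 → Fin 7) (k : Fin 3) :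
    α (Fin.cons (f k) (f ∘ k.succAbove)) = ((-1 : ℤ) ^ (k : ℕ)) • α f := by
  rw [cons_succAbove_eq, hα ((k.cycleRange)⁻¹) f]
  congr 2
  rw [map_inv, Fin.sign_cycleRange]
  simp

/-- forward map for the half-edge bijection -/
def fwd (p : (Fin 2 → Fin 7) × Fin 7) : (Fin 3 → Fin 7) × Fin 3 :=
  if p.2 < p.1 0 then (![p.2, p.1 0, p.1 1], 0)
  else if p.2 < p.1 1 then (![p.1 0, p.2, p.1 1], 1)
  else (![p.1 0, p.1 1, p.2], 2)

def bwd (q : (Fin 3 → Fin 7) × Fin 3) : (Fin 2 → Fin 7) × Fin 7 :=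
  (q.1 ∘ q.2.succAbove, q.1 q.2)

lemma fwdA {g : Fin 2 → Fin 7} {v : Fin 7} (h : v < g 0) :
    fwd (g, v) = (![v, g 0, g 1], (0 : Fin 3)) := by
  unfold fwd
  rw [if_pos h]

lemma fwdB {g : Fin 2 → Fin 7} {v : Fin 7} (h0 : ¬ v < g 0) (h1 : v < g 1) :
    fwd (g, v) = (![g 0, v, g 1], (1 : Fin 3)) := by
  unfold fwd
  rw [if_neg h0, if_pos h1]

lemma fwdC {g : Fin 2 → Fin 7} {v : Fin 7} (h0 : ¬ v < g 0) (h1 : ¬ v < g 1) :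
    fwd (g, v) = (![g 0, g 1, v], (2 : Fin 3)) := by
  unfold fwd
  rw [if_neg h0, if_neg h1]

lemma vtri {g : Fin 2 → Fin 7} {v : Fin 7} (hg : g 0 < g 1) (h0 : v ≠ g 0) (h1 : v ≠ g 1) :
    v < g 0 ∨ (g 0 < v ∧ v < g 1) ∨ g 1 < v := by
  rcases lt_trichotomy v (g 0) with h | h | h
  · exact Or.inl h
  · exact absurd h h0
  · rcases lt_trichotomy v (g 1) with h' | h' | h'
    · exact Or.inr (Or.inl ⟨h, h'⟩)
    · exact absurd h' h1
    · exact Or.inr (Or.inr h')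

lemma boundary_parity (α : (Fin 3 → Fin 7) → ℤ) (hα : IsAltChain 2 α) :
    ∑ g ∈ M2, bdry α g = ∑ f ∈ M3, α f := by
  have e1 : ∑ g ∈ M2, bdry α g
      = ∑ p ∈ M2 ×ˢ (univ : Finset (Fin 7)), α (Fin.cons p.2 p.1) := by
    rw [Finset.sum_product]
    rfl
  have e2 : ∑ p ∈ M2 ×ˢ (univ : Finset (Fin 7)), α (Fin.cons p.2 p.1)
      = ∑ p ∈ (M2 ×ˢ (univ : Finset (Fin 7))).filter
          (fun p => p.2 ≠ p.1 0 ∧ p.2 ≠ p.1 1), α (Fin.cons p.2 p.1) := by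
    symm
    apply Finset.sum_filter_of_ne
    intro p _ hne
    constructor
    · intro h
      apply hne
      apply alt_eq_zero_of_not_injective hα
      intro hinj
      have h01 : (Fin.cons p.2 p.1 : Fin 3 → Fin 7) 0 = (Fin.cons p.2 p.1 : Fin 3 → Fin 7) 1 := by
        rw [show (Fin.cons p.2 p.1 : Fin 3 → Fin 7) 0 = p.2 from rfl,
          show (Fin.cons p.2 p.1 : Fin 3 → Fin 7) 1 = p.1 0 from rfl, h]
      exact absurd (hinj h01) (by decide)
    · intro h
      apply hne
      apply alt_eq_zero_of_not_injective hα
      intro hinj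
      have h02 : (Fin.cons p.2 p.1 : Fin 3 → Fin 7) 0 = (Fin.cons p.2 p.1 : Fin 3 → Fin 7) 2 := by
        rw [show (Fin.cons p.2 p.1 : Fin 3 → Fin 7) 0 = p.2 from rfl,
          show (Fin.cons p.2 p.1 : Fin 3 → Fin 7) 2 = p.1 1 from rfl, h]
      exact absurd (hinj h02) (by decide)
  have hleft : ∀ p ∈ (M2 ×ˢ (univ : Finset (Fin 7))).filter
      (fun p => p.2 ≠ p.1 0 ∧ p.2 ≠ p.1 1), bwd (fwd p) = p := by
    rintro ⟨g, v⟩ hp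
    simp only [Finset.mem_filter, Finset.mem_product, M2, Finset.mem_univ, true_and,
      and_true] at hp
    obtain ⟨hg, h0, h1⟩ := hp
    rcases vtri hg h0 h1 with h | ⟨ha, hb⟩ | h
    · rw [fwdA h]
      refine Prod.ext ?_ rfl
      show ![v, g 0, g 1] ∘ (0 : Fin 3).succAbove = g
      funext x
      fin_cases x <;> rfl
    · rw [fwdB (not_lt.mpr ha.le) hb]
      refine Prod.ext ?_ rfl
      show ![g 0, v, g 1] ∘ (1 : Fin 3).succAbove = g
      funext x
      fin_cases x <;> rfl
    · rw [fwdC (not_lt.mpr (hg.trans h).le) (not_lt.mpr h.le)]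
      refine Prod.ext ?_ rfl
      show ![g 0, g 1, v] ∘ (2 : Fin 3).succAbove = g
      funext x
      fin_cases x <;> rfl
  have e3 : ∑ p ∈ (M2 ×ˢ (univ : Finset (Fin 7))).filter
        (fun p => p.2 ≠ p.1 0 ∧ p.2 ≠ p.1 1), α (Fin.cons p.2 p.1)
      = ∑ q ∈ M3 ×ˢ (univ : Finset (Fin 3)),
          α (Fin.cons (q.1 q.2) (q.1 ∘ q.2.succAbove)) := by
    apply Finset.sum_nbij' fwd bwd
    · rintro ⟨g, v⟩ hp
      simp only [Finset.mem_filter, Finset.mem_product, M2, Finset.mem_univ, true_and,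
        and_true] at hp
      obtain ⟨hg, h0, h1⟩ := hp
      simp only [Finset.mem_product, Finset.mem_univ, and_true, M3, Finset.mem_filter, true_and]
      rcases vtri hg h0 h1 with h | ⟨ha, hb⟩ | h
      · rw [fwdA h]
        exact ⟨h, hg⟩
      · rw [fwdB (not_lt.mpr ha.le) hb]
        exact ⟨ha, hb⟩
      · rw [fwdC (not_lt.mpr (hg.trans h).le) (not_lt.mpr h.le)]
        exact ⟨hg, h⟩
    · rintro ⟨f, k⟩ hq
      simp only [Finset.mem_product, Finset.mem_univ, and_true, M3, Finset.mem_filter,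
        true_and] at hq
      obtain ⟨h01, h12⟩ := hq
      simp only [Finset.mem_filter, Finset.mem_product, M2, Finset.mem_univ, true_and, and_true]
      fin_cases k
      · exact ⟨h12, ne_of_lt h01, ne_of_lt (h01.trans h12)⟩
      · exact ⟨h01.trans h12, ne_of_gt h01, ne_of_lt h12⟩
      · exact ⟨h01, ne_of_gt (h01.trans h12), ne_of_gt h12⟩
    · exact hleft
    · rintro ⟨f, k⟩ hq
      simp only [Finset.mem_product, Finset.mem_univ, and_true, M3, Finset.mem_filter,
        true_and] at hq
      obtain ⟨h01, h12⟩ := hq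
      fin_cases k
      · show fwd (f ∘ (0 : Fin 3).succAbove, f 0) = (f, 0)
        rw [fwdA (show f 0 < (f ∘ (0 : Fin 3).succAbove) 0 from h01)]
        refine Prod.ext ?_ rfl
        show ![f 0, (f ∘ (0 : Fin 3).succAbove) 0, (f ∘ (0 : Fin 3).succAbove) 1] = f
        funext x
        fin_cases x <;> rfl
      · show fwd (f ∘ (1 : Fin 3).succAbove, f 1) = (f, 1)
        rw [fwdB (show ¬ f 1 < (f ∘ (1 : Fin 3).succAbove) 0 from not_lt.mpr h01.le)
          (show f 1 < (f ∘ (1 : Fin 3).succAbove) 1 from h12)]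
        refine Prod.ext ?_ rfl
        show ![(f ∘ (1 : Fin 3).succAbove) 0, f 1, (f ∘ (1 : Fin 3).succAbove) 1] = f
        funext x
        fin_cases x <;> rfl
      · show fwd (f ∘ (2 : Fin 3).succAbove, f 2) = (f, 2)
        rw [fwdC (show ¬ f 2 < (f ∘ (2 : Fin 3).succAbove) 0 from
            not_lt.mpr (h01.trans h12).le)
          (show ¬ f 2 < (f ∘ (2 : Fin 3).succAbove) 1 from not_lt.mpr h12.le)]
        refine Prod.ext ?_ rfl
        show ![(f ∘ (2 : Fin 3).succAbove) 0, (f ∘ (2 : Fin 3).succAbove) 1, f 2] = f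
        funext x
        fin_cases x <;> rfl
    · intro p hp
      have h := hleft p hp
      have h1 : (fwd p).1 ∘ (fwd p).2.succAbove = p.1 := congrArg Prod.fst h
      have h2 : (fwd p).1 (fwd p).2 = p.2 := congrArg Prod.snd h
      rw [h1, h2]
  have e4 : ∑ q ∈ M3 ×ˢ (univ : Finset (Fin 3)),
        α (Fin.cons (q.1 q.2) (q.1 ∘ q.2.succAbove)) = ∑ f ∈ M3, α f := by
    rw [Finset.sum_product]
    refine Finset.sum_congr rfl fun f _ => ?_
    rw [show (∑ k : Fin 3, α (Fin.cons (f k) (f ∘ k.succAbove)))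
        = ∑ k : Fin 3, ((-1 : ℤ) ^ (k : ℕ)) • α f from
      Finset.sum_congr rfl fun k _ => alt_cons_succAbove hα f k]
    rw [Fin.sum_univ_three]
    simp only [Fin.val_zero, Fin.val_one, Fin.val_two, zsmul_eq_mul]
    ring
  rw [e1, e2, e3, e4]

lemma perm_card : (univ : Finset (Equiv.Perm (Fin 3))).card = 6 := by
  decide

lemma strictMono_of_M3 {f : Fin 3 → Fin 7} (h1 : f 0 < f 1) (h2 : f 1 < f 2) :
    StrictMono f := by
  rw [Fin.strictMono_iff_lt_succ]
  intro i
  fin_cases i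
  · exact h1
  · exact h2

lemma sort_comp {f : Fin 3 → Fin 7} (hf : StrictMono f) (σ : Equiv.Perm (Fin 3)) :
    Tuple.sort (f ∘ ⇑σ) = σ⁻¹ := by
  have h2 : f ∘ ⇑(σ * Tuple.sort (f ∘ ⇑σ)) = f ∘ ⇑(1 : Equiv.Perm (Fin 3)) := by
    apply Tuple.unique_monotone
    · rw [Equiv.Perm.coe_mul]
      exact Tuple.monotone_sort (f ∘ ⇑σ)
    · simpa using hf.monotone
  have h3 : σ * Tuple.sort (f ∘ ⇑σ) = 1 := by
    apply Equiv.ext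
    intro x
    have hx := congrFun h2 x
    exact hf.injective hx
  exact eq_inv_of_mul_eq_one_right h3

lemma sum_abs_eq_six_mul (α : (Fin 3 → Fin 7) → ℤ) (hα : IsAltChain 2 α) :
    ∑ f : Fin 3 → Fin 7, |α f| = 6 * ∑ f ∈ M3, |α f| := by
  have h1 : ∑ f : Fin 3 → Fin 7, |α f|
      = ∑ f ∈ univ.filter (fun f : Fin 3 → Fin 7 => Function.Injective f), |α f| := by
    symm
    apply Finset.sum_filter_of_ne
    intro f _ hne
    by_contra hni
    exact hne (by rw [alt_eq_zero_of_not_injective hα hni]; simp)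
  have h2 : ∑ f ∈ univ.filter (fun f : Fin 3 → Fin 7 => Function.Injective f), |α f|
      = ∑ q ∈ M3 ×ˢ (univ : Finset (Equiv.Perm (Fin 3))), |α (q.1 ∘ ⇑q.2)| := by
    symm
    apply Finset.sum_nbij' (fun q : (Fin 3 → Fin 7) × Equiv.Perm (Fin 3) => q.1 ∘ ⇑q.2)
      (fun h : Fin 3 → Fin 7 => (h ∘ ⇑(Tuple.sort h), (Tuple.sort h)⁻¹))
    · intro q hq
      simp only [Finset.mem_product, M3, Finset.mem_filter, Finset.mem_univ, true_and] at hq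
      simp only [Finset.mem_filter, Finset.mem_univ, true_and]
      exact (strictMono_of_M3 hq.1.1 hq.1.2).injective.comp (Equiv.injective _)
    · intro h hh
      simp only [Finset.mem_filter, Finset.mem_univ, true_and] at hh
      have hsm : StrictMono (h ∘ ⇑(Tuple.sort h)) :=
        (Tuple.monotone_sort h).strictMono_of_injective (hh.comp (Equiv.injective _))
      simp only [Finset.mem_product, M3, Finset.mem_filter, Finset.mem_univ, true_and, and_true]
      exact ⟨hsm (by decide), hsm (by decide)⟩
    · intro q hq
      simp only [Finset.mem_product, M3, Finset.mem_filter, Finset.mem_univ, true_and] at hq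
      have hs := sort_comp (strictMono_of_M3 hq.1.1 hq.1.2) q.2
      rw [hs]
      refine Prod.ext ?_ (by simp)
      funext x
      simp
    · intro h _
      funext x
      simp
    · intro q _
      rfl
  rw [h1, h2, Finset.sum_product, Finset.mul_sum]
  refine Finset.sum_congr rfl fun f _ => ?_
  rw [show (∑ σ : Equiv.Perm (Fin 3), |α (f ∘ ⇑σ)|) = ∑ _σ : Equiv.Perm (Fin 3), |α f| from
    Finset.sum_congr rfl fun σ _ => by
      rw [hα σ f, zsmul_eq_mul, abs_mul]
      rcases Int.units_eq_one_or (Equiv.Perm.sign σ) with h | h <;> rw [h] <;> simp]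
  rw [Finset.sum_const, perm_card]
  simp [mul_comm]

end Parity

section Concrete

open Finset

set_option maxRecDepth 100000
set_option maxHeartbeats 8000000

lemma IsAltChain.add {V : Type*} {n : ℕ} {R : Type*} [AddCommGroup R]
    {c d : (Fin (n + 1) → V) → R} (hc : IsAltChain n c) (hd : IsAltChain n d) :
    IsAltChain n (fun f => c f + d f) := fun σ f => by
  simp only
  rw [hc σ f, hd σ f, smul_add]

lemma simplexChain_comp {V : Type*} [DecidableEq V] {n : ℕ} (s : Fin (n + 1) → V)
    (σ : Equiv.Perm (Fin (n + 1))) (f : Fin (n + 1) → V) :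
    simplexChain s (f ∘ ⇑σ) = (Equiv.Perm.sign σ : ℤ) • simplexChain s f :=
  simplexChain_alt s σ f

/-- The integral filling by seven triangles. -/
def alphaZ : (Fin 3 → Fin 7) → ℤ := fun f =>
  simplexChain ![0,1,2] f + simplexChain ![0,3,4] f + simplexChain ![0,5,6] f +
  simplexChain ![2,3,6] f + simplexChain ![2,6,1] f + simplexChain ![2,1,4] f +
  simplexChain ![2,4,5] f

/-- Twice the optimal rational filling (an integral chain). -/
def betaZ : (Fin 3 → Fin 7) → ℤ := fun f =>
  simplexChain ![0,1,2] f + simplexChain ![0,1,4] f + simplexChain ![0,3,4] f +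
  simplexChain ![0,3,6] f + simplexChain ![0,5,6] f + simplexChain ![1,2,3] f +
  simplexChain ![1,3,6] f + simplexChain ![1,4,5] f + simplexChain ![1,5,6] f +
  simplexChain ![2,3,4] f + simplexChain ![2,4,5] f + simplexChain ![0,5,2] f

/-- The integral dual certificate (edge weights). -/
def yZ : (Fin 2 → Fin 7) → ℤ := fun g =>
  simplexChain ![0,3] g + simplexChain ![0,5] g + simplexChain ![1,2] g +
  simplexChain ![1,3] g + simplexChain ![1,4] g + simplexChain ![1,5] g +
  simplexChain ![2,3] g + simplexChain ![4,5] g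

lemma alphaZ_alt : IsAltChain 2 alphaZ := fun σ f => by
  simp only [alphaZ, simplexChain_comp _ σ, smul_add]

lemma betaZ_alt : IsAltChain 2 betaZ := fun σ f => by
  simp only [betaZ, simplexChain_comp _ σ, smul_add]

lemma yZ_alt : IsAltChain 1 yZ := fun σ f => by
  simp only [yZ, simplexChain_comp _ σ, smul_add]

lemma alphaZ_bdry : ∀ g : Fin 2 → Fin 7, bdry alphaZ g = gapComplex g := by decide

lemma alphaZ_norm : ∑ f : Fin 3 → Fin 7, |alphaZ f| = 42 := by decide

lemma betaZ_bdry : ∀ g : Fin 2 → Fin 7, bdry betaZ g = 2 * gapComplex g := by decide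

lemma betaZ_norm : ∑ f : Fin 3 → Fin 7, |betaZ f| = 72 := by decide

lemma yZ_flux : ∀ t : Fin 3 → Fin 7,
    (∑ i : Fin 3, ((-1 : ℤ) ^ (i : ℕ) * yZ (t ∘ i.succAbove))) ≤ 1 := by decide

lemma yZ_pair : ∑ g : Fin 2 → Fin 7, gapComplex g * yZ g = 12 := by decide

lemma K_M2 : ∑ g ∈ M2, gapComplex g = 5 := by decide

end Concrete

section Main

open Finset

noncomputable def phiR : (Fin 2 → Fin 7) → ℝ := fun g => (yZ g : ℝ)

lemma phiR_alt : IsAltChain 1 phiR := fun σ f => by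
  simp only [phiR]
  rw [yZ_alt σ f]
  push_cast [zsmul_eq_mul]
  ring

lemma phiR_unitflux : UnitFlux 1 phiR := by
  intro t _
  have h := yZ_flux t
  have e : (∑ i : Fin 3, (-1 : ℝ) ^ (i : ℕ) * phiR (t ∘ i.succAbove))
      = ((∑ i : Fin 3, ((-1 : ℤ) ^ (i : ℕ) * yZ (t ∘ i.succAbove)) : ℤ) : ℝ) := by
    push_cast [phiR]
    rfl
  rw [show (∑ i : Fin (1+2), (-1 : ℝ) ^ (i : ℕ) * phiR (t ∘ i.succAbove))
    = (∑ i : Fin 3, (-1 : ℝ) ^ (i : ℕ) * phiR (t ∘ i.succAbove)) from rfl, e]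
  exact_mod_cast h

lemma lb_real (α : (Fin 3 → Fin 7) → ℝ) (hα : IsAltChain 2 α)
    (hb : ∀ g : Fin 2 → Fin 7, bdry α g = (gapComplex g : ℝ)) :
    36 ≤ ∑ f : Fin 3 → Fin 7, |α f| := by
  have h := lp_bound phiR phiR_alt phiR_unitflux α hα
  have hsum : ∑ g : Fin 2 → Fin 7, bdry α g * phiR g = 12 := by
    have e : ∀ g : Fin 2 → Fin 7, bdry α g * phiR g = ((gapComplex g * yZ g : ℤ) : ℝ) := by
      intro g
      rw [hb g]
      push_cast [phiR]
      ring
    rw [Finset.sum_congr rfl fun g _ => e g, ← Int.cast_sum, yZ_pair]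
    norm_num
  rw [hsum] at h
  linarith

def alphaQ : (Fin 3 → Fin 7) → ℚ := fun f => (betaZ f : ℚ) / 2

lemma alphaQ_alt : IsAltChain 2 alphaQ := fun σ f => by
  simp only [alphaQ]
  rw [betaZ_alt σ f]
  push_cast [zsmul_eq_mul]
  ring

lemma alphaQ_bdry : ∀ g : Fin 2 → Fin 7, bdry alphaQ g = (gapComplex g : ℚ) := by
  intro g
  have e : bdry alphaQ g = ((bdry betaZ g : ℤ) : ℚ) / 2 := by
    unfold bdry alphaQ
    rw [← Finset.sum_div]
    push_cast
    rfl
  rw [e, betaZ_bdry g]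
  push_cast
  ring

lemma alphaQ_norm : normQ alphaQ = 6 := by
  unfold normQ
  have e : ∑ f : Fin 3 → Fin 7, |((alphaQ f : ℚ) : ℝ)|
      = ((∑ f : Fin 3 → Fin 7, |betaZ f| : ℤ) : ℝ) / 2 := by
    rw [Int.cast_sum, Finset.sum_div]
    apply Finset.sum_congr rfl
    intro f _
    simp only [alphaQ]
    push_cast
    rw [abs_div]
    norm_num
  rw [show (∑ f : Fin (2+1) → Fin 7, |((alphaQ f : ℚ) : ℝ)|)
    = (∑ f : Fin 3 → Fin 7, |((alphaQ f : ℚ) : ℝ)|) from rfl, e, betaZ_norm]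
  norm_num [Nat.factorial]

lemma alphaZ_normZ : normZ alphaZ = 7 := by
  unfold normZ
  have e : ∑ f : Fin 3 → Fin 7, |((alphaZ f : ℤ) : ℝ)|
      = ((∑ f : Fin 3 → Fin 7, |alphaZ f| : ℤ) : ℝ) := by
    push_cast
    rfl
  rw [show (∑ f : Fin (2+1) → Fin 7, |((alphaZ f : ℤ) : ℝ)|)
    = (∑ f : Fin 3 → Fin 7, |((alphaZ f : ℤ) : ℝ)|) from rfl, e, alphaZ_norm]
  norm_num [Nat.factorial]

lemma VQ_lb (α : (Fin 3 → Fin 7) → ℚ) (hα : IsAltChain 2 α)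
    (hb : ∀ g : Fin 2 → Fin 7, bdry α g = (gapComplex g : ℚ)) : (6 : ℝ) ≤ normQ α := by
  have hRalt : IsAltChain 2 (fun f : Fin 3 → Fin 7 => ((α f : ℚ) : ℝ)) := fun σ f => by
    simp only
    rw [hα σ f]
    push_cast [zsmul_eq_mul]
    ring
  have hRb : ∀ g : Fin 2 → Fin 7,
      bdry (fun f : Fin 3 → Fin 7 => ((α f : ℚ) : ℝ)) g = (gapComplex g : ℝ) := by
    intro g
    unfold bdry
    rw [show (∑ v : Fin 7, ((α (Fin.cons v g) : ℚ) : ℝ))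
      = (((∑ v : Fin 7, α (Fin.cons v g) : ℚ)) : ℝ) by push_cast; rfl]
    rw [show (∑ v : Fin 7, α (Fin.cons v g)) = bdry α g from rfl, hb g]
    push_cast
    rfl
  have h := lb_real _ hRalt hRb
  unfold normQ
  rw [show ((Nat.factorial (2+1) : ℕ) : ℝ) = 6 by norm_num [Nat.factorial]]
  rw [le_div_iff₀ (by norm_num : (0:ℝ) < 6)]
  calc (6:ℝ) * 6 = 36 := by norm_num
    _ ≤ _ := h

lemma VZ_lb (α : (Fin 3 → Fin 7) → ℤ) (hα : IsAltChain 2 α)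
    (hb : ∀ g : Fin 2 → Fin 7, bdry α g = gapComplex g) : (7 : ℝ) ≤ normZ α := by
  have h6 : ∑ f : Fin 3 → Fin 7, |α f| = 6 * ∑ f ∈ M3, |α f| := sum_abs_eq_six_mul α hα
  set N : ℤ := ∑ f ∈ M3, |α f| with hN
  have hcast : ∑ f : Fin 3 → Fin 7, |((α f : ℤ) : ℝ)| = ((6 * N : ℤ) : ℝ) := by
    rw [← h6]
    push_cast
    rfl
  have hRalt : IsAltChain 2 (fun f : Fin 3 → Fin 7 => ((α f : ℤ) : ℝ)) := fun σ f => by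
    simp only
    rw [hα σ f]
    push_cast [zsmul_eq_mul]
    ring
  have hRb : ∀ g : Fin 2 → Fin 7,
      bdry (fun f : Fin 3 → Fin 7 => ((α f : ℤ) : ℝ)) g = (gapComplex g : ℝ) := by
    intro g
    unfold bdry
    rw [show (∑ v : Fin 7, ((α (Fin.cons v g) : ℤ) : ℝ))
      = (((∑ v : Fin 7, α (Fin.cons v g) : ℤ)) : ℝ) by push_cast; rfl]
    rw [show (∑ v : Fin 7, α (Fin.cons v g)) = bdry α g from rfl, hb g]
  have hlp := lb_real _ hRalt hRb
  have hN6 : (6 : ℤ) ≤ N := by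
    have h36 : (36 : ℝ) ≤ ((6 * N : ℤ) : ℝ) := by
      rw [← hcast]
      exact hlp
    have : (36 : ℤ) ≤ 6 * N := by exact_mod_cast h36
    omega
  have hpar : ∑ f ∈ M3, α f = 5 := by
    rw [← boundary_parity α hα, Finset.sum_congr rfl fun g _ => hb g]
    exact K_M2
  have hodd : N % 2 = 1 := by
    have h1 : N % 2 = (∑ f ∈ M3, α f) % 2 := by
      rw [hN, Finset.sum_int_mod, Finset.sum_int_mod (f := fun f => α f)]
      congr 1
      apply Finset.sum_congr rfl
      intro f _
      rcases abs_cases (α f) with ⟨h, _⟩ | ⟨h, _⟩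
      · rw [h]
      · rw [h, Int.neg_emod_two]
    rw [h1, hpar]
    decide
  have hN7 : (7 : ℤ) ≤ N := by omega
  have heq : normZ α = (N : ℝ) := by
    unfold normZ
    rw [show (∑ f : Fin (2+1) → Fin 7, |((α f : ℤ) : ℝ)|)
      = (∑ f : Fin 3 → Fin 7, |((α f : ℤ) : ℝ)|) from rfl, hcast,
      show ((Nat.factorial (2+1) : ℕ) : ℝ) = 6 by norm_num [Nat.factorial]]
    push_cast
    ring
  rw [heq]
  exact_mod_cast hN7

end Main

/-- Integrality gap in dimension 1: `V_ℤ = 7`, `V_ℚ = 6`, so the gap is `1`. -/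
theorem stmt16 : VZ 1 gapComplex = 7 ∧ VQ 1 gapComplex = 6 ∧
    VZ 1 gapComplex - VQ 1 gapComplex = 1 := by
  have memZ : (7 : ℝ) ∈ { x : ℝ | ∃ α : (Fin (1 + 2) → Fin 7) → ℤ,
      IsAltChain (1 + 1) α ∧ (∀ g, bdry α g = gapComplex g) ∧ x = normZ α } :=
    ⟨alphaZ, alphaZ_alt, alphaZ_bdry, alphaZ_normZ.symm⟩
  have lbZ : ∀ x ∈ { x : ℝ | ∃ α : (Fin (1 + 2) → Fin 7) → ℤ,
      IsAltChain (1 + 1) α ∧ (∀ g, bdry α g = gapComplex g) ∧ x = normZ α }, (7 : ℝ) ≤ x := by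
    rintro x ⟨α, h1, h2, rfl⟩
    exact VZ_lb α h1 h2
  have hZ : VZ 1 gapComplex = 7 :=
    le_antisymm (csInf_le ⟨7, lbZ⟩ memZ) (le_csInf ⟨7, memZ⟩ lbZ)
  have memQ : (6 : ℝ) ∈ { x : ℝ | ∃ α : (Fin (1 + 2) → Fin 7) → ℚ,
      IsAltChain (1 + 1) α ∧ (∀ g, bdry α g = (gapComplex g : ℚ)) ∧ x = normQ α } :=
    ⟨alphaQ, alphaQ_alt, alphaQ_bdry, alphaQ_norm.symm⟩
  have lbQ : ∀ x ∈ { x : ℝ | ∃ α : (Fin (1 + 2) → Fin 7) → ℚ,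
      IsAltChain (1 + 1) α ∧ (∀ g, bdry α g = (gapComplex g : ℚ)) ∧ x = normQ α }, (6 : ℝ) ≤ x := by
    rintro x ⟨α, h1, h2, rfl⟩
    exact VQ_lb α h1 h2
  have hQ : VQ 1 gapComplex = 6 :=
    le_antisymm (csInf_le ⟨6, lbQ⟩ memQ) (le_csInf ⟨6, memQ⟩ lbQ)
  exact ⟨hZ, hQ, by rw [hZ, hQ]; norm_num⟩
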